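/- The following two assertions are equivalent: (1) every regular clustered cell of finite order (over any definable S ⊆ ℚ_p^r, for any r) can be partitioned into finitely many regular clustered cells of order 1; (2) every regular clustered cell of minimal order has order 1. -/
import Mathlib


open FirstOrder Language Set

namespace ClusteredNote

def pball (p : ℕ) [Fact p.Prime] (a : ℚ_[p]) (γ : ℤ) : Set ℚ_[p] :=
  {x | ∃ z : ℤ_[p], x = a + (p : ℚ_[p]) ^ γ * (z : ℚ_[p])}

def IsBall (p : ℕ) [Fact p.Prime] (B : Set ℚ_[p]) : Prop :=
  ∃ (a : ℚ_[p]) (γ : ℤ), B = pball p a γ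

noncomputable def ordv (p : ℕ) [Fact p.Prime] (x : ℚ_[p]) : WithTop ℤ :=
  open scoped Classical in
  if x = 0 then ⊤ else (x.valuation : WithTop ℤ)

noncomputable def unitPart (p : ℕ) [Fact p.Prime] (x : ℚ_[p]) : ℤ_[p] :=
  if h : ‖x * (p : ℚ_[p]) ^ (-x.valuation)‖ ≤ 1 then ⟨_, h⟩ else 0

noncomputable def acm (p : ℕ) [Fact p.Prime] (m : ℕ) (x : ℚ_[p]) : ZMod (p ^ m) :=
  PadicInt.toZModPow m (unitPart p x)

noncomputable def ac1 (p : ℕ) [Fact p.Prime] (x : ℚ_[p]) : ZMod p :=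
  PadicInt.toZMod (unitPart p x)

/-- The set `Q_{n,m}`. -/
def Qnm (p : ℕ) [Fact p.Prime] (n m : ℕ) : Set ℚ_[p] :=
  {x | x ≠ 0 ∧ (n : ℤ) ∣ x.valuation ∧ acm p m x = 1}

/-- The canonical ring-language structure on `ℚ_p`. -/
noncomputable instance (p : ℕ) [Fact p.Prime] : Language.ring.Structure ℚ_[p] :=
  (FirstOrder.Ring.compatibleRingOfRing ℚ_[p]).toStructure

/-- `L`-definability (with parameters from `ℚ_p`) for subsets of `ℚ_p^n`. -/
def Def1 (p : ℕ) [Fact p.Prime] (L : Language) [L.Structure ℚ_[p] ] {n : ℕ}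
    (s : Set (Fin n → ℚ_[p])) : Prop :=
  Set.Definable (Set.univ : Set ℚ_[p]) L s

/-- Definability for subsets of `ℚ_p^r × ℚ_p`. -/
def DefPair (p : ℕ) [Fact p.Prime] (L : Language) [L.Structure ℚ_[p] ] {r : ℕ}
    (X : Set ((Fin r → ℚ_[p]) × ℚ_[p])) : Prop :=
  Def1 p L {v : Fin (r + 1) → ℚ_[p] | (Fin.init v, v (Fin.last r)) ∈ X}

/-- A definable function `S → ℤ` (into the value group), encoded via `ord`. -/
def DefZFun (p : ℕ) [Fact p.Prime] (L : Language) [L.Structure ℚ_[p] ] {r : ℕ}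
    (S : Set (Fin r → ℚ_[p])) (α : (Fin r → ℚ_[p]) → ℤ) : Prop :=
  DefPair p L {x : (Fin r → ℚ_[p]) × ℚ_[p] | x.1 ∈ S ∧ x.2 ≠ 0 ∧ x.2.valuation = α x.1}

/-- A definable function `S → ℚ_p`. -/
def DefFun (p : ℕ) [Fact p.Prime] (L : Language) [L.Structure ℚ_[p] ] {r : ℕ}
    (S : Set (Fin r → ℚ_[p])) (c : (Fin r → ℚ_[p]) → ℚ_[p]) : Prop :=
  DefPair p L {x : (Fin r → ℚ_[p]) × ℚ_[p] | x.1 ∈ S ∧ x.2 = c x.1}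

/-- `P`-minimality of the `L`-structure `ℚ_p`: in every `L`-structure elementarily
equivalent to `ℚ_p`, every `L`-definable set (with parameters) is definable (with
parameters) in the language of rings. -/
def PMinimal (p : ℕ) [Fact p.Prime] (L : Language) [L.Structure ℚ_[p] ]
    (φ : Language.ring →ᴸ L) : Prop :=
  ∀ (M : Type) (_ : L.Structure M), (ℚ_[p] ≅[L] M) →
    ∀ s : Set (Fin 1 → M),
      Set.Definable (Set.univ : Set M) L s →
      letI := φ.reduct M
      Set.Definable (Set.univ : Set M) Language.ring s

/-- A cell condition over a definable set `S ⊆ ℚ_p^r`. -/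
structure CellCond (p : ℕ) [Fact p.Prime] (L : Language) [L.Structure ℚ_[p] ]
    (r : ℕ) (S : Set (Fin r → ℚ_[p])) where
  α : (Fin r → ℚ_[p]) → ℤ
  β : (Fin r → ℚ_[p]) → ℤ
  /-- whether the lower bound `α(s) <` is present -/
  lo : Bool
  /-- whether the upper bound `< β(s)` is present -/
  hi : Bool
  n : ℕ
  m : ℕ
  hn : 1 ≤ n
  hm : 1 ≤ m
  lam : ℚ_[p]
  S_def : Def1 p L S
  α_def : DefZFun p L S α
  β_def : DefZFun p L S β

variable {p : ℕ} [Fact p.Prime] {L : Language} [L.Structure ℚ_[p] ]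

/-- The condition `C(s,c,t)` holds. -/
def CellCond.holds {r : ℕ} {S : Set (Fin r → ℚ_[p])} (C : CellCond p L r S)
    (s : Fin r → ℚ_[p]) (c t : ℚ_[p]) : Prop :=
  s ∈ S ∧
  (C.lo = true → (C.α s : WithTop ℤ) < ordv p (t - c)) ∧
  (C.hi = true → ordv p (t - c) < (C.β s : WithTop ℤ)) ∧
  ∃ q ∈ Qnm p C.n C.m, t - c = C.lam * q

/-- The fiber of a set `Σ ⊆ S × ℚ_p` at `s`. -/
def fib {A B : Type*} (T : Set (A × B)) (s : A) : Set B := {c | (s, c) ∈ T}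

/-- The set `C^Σ`. -/
def CellCond.cellSet {r : ℕ} {S : Set (Fin r → ℚ_[p])} (C : CellCond p L r S)
    (T : Set ((Fin r → ℚ_[p]) × ℚ_[p])) : Set ((Fin r → ℚ_[p]) × ℚ_[p]) :=
  {x | ∃ c, (x.1, c) ∈ T ∧ C.holds x.1 c x.2}

/-- The set `C^σ` for a function `σ`. -/
def CellCond.cellSetF {r : ℕ} {S : Set (Fin r → ℚ_[p])} (C : CellCond p L r S)
    (σ : (Fin r → ℚ_[p]) → ℚ_[p]) : Set ((Fin r → ℚ_[p]) × ℚ_[p]) :=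
  {x | C.holds x.1 (σ x.1) x.2}

/-- `(C,Σ_s)`-equivalence of centers. -/
def CellCond.equivC {r : ℕ} {S : Set (Fin r → ℚ_[p])} (C : CellCond p L r S)
    (s : Fin r → ℚ_[p]) (c c' : ℚ_[p]) : Prop :=
  {t | C.holds s c t} = {t | C.holds s c' t}

/-- `C^Σ` is a clustered cell of order `k`. -/
structure IsClusteredCell {r : ℕ} {S : Set (Fin r → ℚ_[p])} (C : CellCond p L r S)
    (T : Set ((Fin r → ℚ_[p]) × ℚ_[p])) (k : ℕ) : Prop where
  kpos : 1 ≤ k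
  lo : C.lo = true
  lam_ne : C.lam ≠ 0
  T_def : DefPair p L T
  T_sub : ∀ x ∈ T, x.1 ∈ S
  fib_classes : ∀ s ∈ S, ∃ cs : Fin k → ℚ_[p],
      (∀ i, cs i ∈ fib T s) ∧
      (∀ i j, i ≠ j → ¬ C.equivC s (cs i) (cs j)) ∧
      (∀ c ∈ fib T s, c ≠ 0 ∧ ∃ i, C.equivC s c (cs i))

/-- The tree of balls associated to a subset of `ℚ_p`. -/
def tree (p : ℕ) [Fact p.Prime] (F : Set ℚ_[p]) : Set (Set ℚ_[p]) :=
  {B | ∃ c ∈ F, ∃ γ : ℤ, B = pball p c γ}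

/-- `γ` is a branching height of `c` in `F`. -/
def IsBranchingHeightOf (p : ℕ) [Fact p.Prime] (F : Set ℚ_[p]) (c : ℚ_[p]) (γ : ℤ) : Prop :=
  ∃ x ∈ F ∩ pball p c γ, ∃ y ∈ F ∩ pball p c γ, pball p x (γ + 1) ≠ pball p y (γ + 1)

/-- `γ` is a branching height of `F`. -/
def IsBranchingHeight (p : ℕ) [Fact p.Prime] (F : Set ℚ_[p]) (γ : ℤ) : Prop :=
  ∃ c ∈ F, IsBranchingHeightOf p F c γ

/-- `F` has exactly `d` branching heights. -/
def HasExactlyBranchingHeights (p : ℕ) [Fact p.Prime] (F : Set ℚ_[p]) (d : ℕ) : Prop :=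
  ∃ γs : Fin d → ℤ, StrictAnti γs ∧ ∀ γ : ℤ, IsBranchingHeight p F γ ↔ ∃ i, γ = γs i

/-- `c` has exactly `d` branching heights `γ_1 > … > γ_d` in `F`, and its `d`-signature
is `(ks 0, …, ks (d-1))`. -/
def HasSignature (p : ℕ) [Fact p.Prime] (F : Set ℚ_[p]) (c : ℚ_[p]) {d : ℕ}
    (ks : Fin d → ℕ) : Prop :=
  ∃ γs : Fin d → ℤ, StrictAnti γs ∧
    (∀ γ : ℤ, IsBranchingHeightOf p F c γ ↔ ∃ i, γ = γs i) ∧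
    ∀ i, Set.ncard {B : Set ℚ_[p] | ∃ x ∈ F ∩ pball p c (γs i), B = pball p x (γs i + 1)} = ks i

/-- `C^Σ` is a regular clustered cell of order `k`. -/
structure IsRegularClusteredCell {r : ℕ} {S : Set (Fin r → ℚ_[p])} (C : CellCond p L r S)
    (T : Set ((Fin r → ℚ_[p]) × ℚ_[p])) (k : ℕ)
    extends IsClusteredCell C T k : Prop where
  ord_const : ∀ s ∈ S, ∀ c ∈ fib T s, ∀ c' ∈ fib T s, c.valuation = c'.valuation
  ord_le_α : ∀ s ∈ S, ∀ c ∈ fib T s, c.valuation ≤ C.α s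
  classes_balls : ∀ s ∈ S, ∃ ρ : ℤ, ∀ c ∈ fib T s,
      {c' | c' ∈ fib T s ∧ C.equivC s c c'} = pball p c ρ
  tree_unif : ∀ s ∈ S, ∀ s' ∈ S, Nonempty ((tree p (fib T s)) ≃o (tree p (fib T s')))
  branch_lt_α : ∀ s ∈ S, ∀ γ : ℤ, IsBranchingHeight p (fib T s) γ → γ < C.α s

/-- A set `X` is (the underlying set of) a regular clustered cell of order `k`. -/
def IsRegClusteredSet (p : ℕ) [Fact p.Prime] (L : Language) [L.Structure ℚ_[p] ] {r : ℕ}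
    (X : Set ((Fin r → ℚ_[p]) × ℚ_[p])) (k : ℕ) : Prop :=
  ∃ (S : Set (Fin r → ℚ_[p])) (C : CellCond p L r S) (T : Set ((Fin r → ℚ_[p]) × ℚ_[p])),
    IsRegularClusteredCell C T k ∧ X = C.cellSet T

/-- `piece` is a finite partition of `X` (into pairwise disjoint pieces). -/
def PartitionsInto {A : Type*} (X : Set A) {N : ℕ} (piece : Fin N → Set A) : Prop :=
  (⋃ i, piece i) = X ∧ Pairwise (Function.onFun Disjoint piece)

/-- The clustered cell `C^Σ` is of minimal order `k`: it is a regular clustered cell of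
order `k` that cannot be partitioned into finitely many regular clustered cells of
strictly smaller orders. -/
def IsMinimalOrder {r : ℕ} {S : Set (Fin r → ℚ_[p])} (C : CellCond p L r S)
    (T : Set ((Fin r → ℚ_[p]) × ℚ_[p])) (k : ℕ) : Prop :=
  IsRegularClusteredCell C T k ∧
    ¬ ∃ (N : ℕ) (piece : Fin N → Set ((Fin r → ℚ_[p]) × ℚ_[p])) (ks : Fin N → ℕ),
        PartitionsInto (C.cellSet T) piece ∧
        ∀ i, ks i < k ∧ IsRegClusteredSet p L (piece i) (ks i)


lemma partitions_glue {A : Type*} (X : Set A) (P : Set A → Prop) {N : ℕ}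
    (piece : Fin N → Set A) (hX : PartitionsInto X piece)
    (h : ∀ i, ∃ (M : ℕ) (qs : Fin M → Set A),
      PartitionsInto (piece i) qs ∧ ∀ l, P (qs l)) :
    ∃ (K : ℕ) (rs : Fin K → Set A), PartitionsInto X rs ∧ ∀ j, P (rs j) := by
  choose M qs hq hP using h
  let e := Fintype.equivFin ((i : Fin N) × Fin (M i))
  refine ⟨Fintype.card ((i : Fin N) × Fin (M i)),
    fun j => qs (e.symm j).1 (e.symm j).2, ⟨?_, ?_⟩, fun j => hP _ _⟩
  · ext x
    simp only [Set.mem_iUnion]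
    constructor
    · rintro ⟨j, hj⟩
      have hx : x ∈ piece (e.symm j).1 := by
        rw [← (hq (e.symm j).1).1]; exact Set.mem_iUnion.mpr ⟨_, hj⟩
      rw [← hX.1]; exact Set.mem_iUnion.mpr ⟨_, hx⟩
    · intro hx
      rw [← hX.1] at hx
      obtain ⟨i, hi⟩ := Set.mem_iUnion.mp hx
      rw [← (hq i).1] at hi
      obtain ⟨l, hl⟩ := Set.mem_iUnion.mp hi
      refine ⟨e ⟨i, l⟩, ?_⟩
      have he : e.symm (e ⟨i, l⟩) = ⟨i, l⟩ := e.symm_apply_apply _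
      rw [he]
      exact hl
  · intro j j' hjj'
    have hne : e.symm j ≠ e.symm j' := fun h => hjj' (e.symm.injective h)
    by_cases hi : (e.symm j).1 = (e.symm j').1
    · rcases hsj : e.symm j with ⟨i, l⟩
      rcases hsj' : e.symm j' with ⟨i', l'⟩
      rw [hsj, hsj'] at hi hne
      dsimp at hi
      subst hi
      have hll : l ≠ l' := fun h => hne (by rw [h])
      show Disjoint (qs (e.symm j).1 (e.symm j).2) (qs (e.symm j').1 (e.symm j').2)
      rw [hsj, hsj']
      exact (hq i).2 hll
    · have h1 : qs (e.symm j).1 (e.symm j).2 ⊆ piece (e.symm j).1 := by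
        rw [← (hq _).1]; exact Set.subset_iUnion _ _
      have h2 : qs (e.symm j').1 (e.symm j').2 ⊆ piece (e.symm j').1 := by
        rw [← (hq _).1]; exact Set.subset_iUnion _ _
      exact (hX.2 hi).mono h1 h2

/-- Equivalence of: (1) every regular clustered cell of finite order can be partitioned
into finitely many regular clustered cells of order 1; (2) every regular clustered cell
of minimal order has order 1. -/
theorem order_one_partition_iff_minimal_order_one
    (p : ℕ) [Fact p.Prime] (L : Language) [L.Structure ℚ_[p] ]
    (φ : Language.ring →ᴸ L) [φ.IsExpansionOn ℚ_[p] ] (hPmin : PMinimal p L φ) :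
    (∀ (r : ℕ) (S : Set (Fin r → ℚ_[p])) (C : CellCond p L r S)
        (T : Set ((Fin r → ℚ_[p]) × ℚ_[p])) (k : ℕ),
      IsRegularClusteredCell C T k →
        ∃ (N : ℕ) (piece : Fin N → Set ((Fin r → ℚ_[p]) × ℚ_[p])),
          PartitionsInto (C.cellSet T) piece ∧
          ∀ i, IsRegClusteredSet p L (piece i) 1) ↔
    (∀ (r : ℕ) (S : Set (Fin r → ℚ_[p])) (C : CellCond p L r S)
        (T : Set ((Fin r → ℚ_[p]) × ℚ_[p])) (k : ℕ),
      IsMinimalOrder C T k → k = 1) := by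
  constructor
  · intro H r S C T k hmin
    obtain ⟨hreg, hnot⟩ := hmin
    by_contra hk
    have hk1 : 1 < k := lt_of_le_of_ne hreg.kpos (Ne.symm hk)
    obtain ⟨N, piece, hpart, h1⟩ := H r S C T k hreg
    exact hnot ⟨N, piece, fun _ => 1, hpart, fun i => ⟨hk1, h1 i⟩⟩
  · intro H
    have key : ∀ k r (S : Set (Fin r → ℚ_[p])) (C : CellCond p L r S)
        (T : Set ((Fin r → ℚ_[p]) × ℚ_[p])), IsRegularClusteredCell C T k →
        ∃ (N : ℕ) (piece : Fin N → Set ((Fin r → ℚ_[p]) × ℚ_[p])),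
          PartitionsInto (C.cellSet T) piece ∧
          ∀ i, IsRegClusteredSet p L (piece i) 1 := by
      intro k
      induction k using Nat.strong_induction_on with
      | _ k IH =>
        intro r S C T hreg
        by_cases hmin : IsMinimalOrder C T k
        · have hk1 := H r S C T k hmin
          subst hk1
          refine ⟨1, fun _ => C.cellSet T, ⟨?_, ?_⟩, fun _ => ⟨S, C, T, hreg, rfl⟩⟩
          · exact Set.iUnion_const _
          · intro i j hij
            exact absurd (Subsingleton.elim i j) hij
        · have hex := not_not.mp (fun hn => hmin ⟨hreg, hn⟩)
          obtain ⟨N, piece, ks, hpart, hks⟩ := hex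
          refine partitions_glue _ (fun Y => IsRegClusteredSet p L Y 1) piece hpart fun i => ?_
          obtain ⟨hlt, S', C', T', hreg', hEq⟩ := hks i
          obtain ⟨M, qs, hq, hP⟩ := IH (ks i) hlt r S' C' T' hreg'
          exact ⟨M, qs, hEq ▸ hq, hP⟩
    intro r S C T k hreg
    exact key k r S C T hreg

end ClusteredNote
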